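/- For every natural number n ≥ 39, every admissible multiplicity function m, every sum labeling ℓ of G(n,m), and every vertex v ∈ ψ(3): ℓ(v) ≠ 1. -/

import Mathlib

/-- `Sn n = {2,3,…,n} ∪ {n+2}`. -/
def Sn (n : ℕ) : Set ℕ := {k | (2 ≤ k ∧ k ≤ n) ∨ k = n + 2}

/-- `m` is an admissible multiplicity function for `Sn n`. -/
def Admissible (n : ℕ) (m : ℕ → ℕ) : Prop :=
  (∀ i ∈ Sn n, 2 * i ∈ Sn n → 2 ≤ m i) ∧
  (∀ i ∈ Sn n, 2 * i ∉ Sn n → m i = 1) ∧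
  (∀ i, i ∉ Sn n → m i = 0)

/-- The vertex set of `G(n,m)`: pairs `(i,j)` with `i ∈ Sn n` and `j < m i`. -/
def Vnm (n : ℕ) (m : ℕ → ℕ) : Set (ℕ × ℕ) := {p | p.1 ∈ Sn n ∧ p.2 < m p.1}

/-- Distinct vertices `u`, `v` of `G(n,m)` are adjacent iff `u.1 + v.1 ∈ Sn n`. -/
def AdjG (n : ℕ) (u v : ℕ × ℕ) : Prop := u ≠ v ∧ u.1 + v.1 ∈ Sn n

/-- `psi m i` is the set of vertices induced by the integer `i`. -/
def psi (m : ℕ → ℕ) (i : ℕ) : Set (ℕ × ℕ) := {p | p.1 = i ∧ p.2 < m i}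

/-- The set of proper terminals of a vertex `v` of `G(n,m)`. -/
def tau (n : ℕ) (m : ℕ → ℕ) (v : ℕ × ℕ) : Set (ℕ × ℕ) :=
  {w ∈ Vnm n m | w ≠ v ∧ v.1 + w.1 ∉ Sn n}

/-- A (possibly non-injective) sum labeling of the graph `G(n,m)`. -/
def IsSumLabelingG (n : ℕ) (m : ℕ → ℕ) (ℓ : ℕ × ℕ → ℕ) : Prop :=
  (∀ v ∈ Vnm n m, 1 ≤ ℓ v) ∧
  ∀ u ∈ Vnm n m, ∀ v ∈ Vnm n m, u ≠ v →
    (AdjG n u v ↔ ∃ w ∈ Vnm n m, ℓ u + ℓ v = ℓ w)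

/-!
Suppose `v ∈ ψ(3)` has label `1`. The vertices not adjacent to `v` are `(n-2,0)`, `(n,0)` and
`(n+2,0)`; call their labels blocked. Adding `ℓ v = 1`, every label `x ≥ 2` that is not blocked
is followed by the label `x + 1`, while no blocked label is. So the labels `≥ 2` form at most
three runs of consecutive integers, each ending at a blocked label, and since the classes
`2 ≤ i ≤ n - 3`, `i ≠ 3`, carry `n - 5` distinct labels, some run `[x, B]` is long.

If another vertex of `ψ(3)` has a label `η ≥ 2`, then `η ≤ 4` (along `η`-progressions, five
consecutive labels would need five distinct stopping values), and adding `η` to `B + 1 - η`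
produces the forbidden label `B + 1`. Otherwise the label `g ≤ 5` of `(2,0)` plays the role of
`η`, and the only escape is that `B + 1 - g` labels `(n-1,0)`, whose neighbours all lie in
`ψ(3)`. This excludes `g ≥ 3`. For `g = 2` it confines `ℓ(n-2,0)` and `ℓ(n,0)` below `9`;
then `ℓ(n+2,0) - ℓ(n,0)` is a large label whose sum with `ℓ(n,0)` is a label, although the
neighbours of `(n,0)` all lie in `ψ(2)`.
-/

open Set

section Progressions

variable {L F : Set ℕ}

lemma exists_add_mul_mem_of_step (hL : BddAbove L) {η : ℕ} (hη : 0 < η)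
    (hstep : ∀ y ∈ L, y ∉ F → y + η ∈ L) {x : ℕ} (hx : x ∈ L) :
    ∃ k, x + k * η ∈ F ∧ ∀ j ≤ k, x + j * η ∈ L ∧ (j < k → x + j * η ∉ F) := by
  classical
  obtain ⟨N, hN⟩ := hL
  have hex : ∃ k, x + k * η ∉ L ∨ x + k * η ∈ F :=
    ⟨N + 1, Or.inl fun h => by have := hN h; nlinarith⟩
  have hbelow : ∀ j < Nat.find hex, x + j * η ∈ L ∧ x + j * η ∉ F := fun j hj => by
    simpa [not_or] using Nat.find_min hex hj
  have hmem : x + Nat.find hex * η ∈ L := by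
    cases h : Nat.find hex with
    | zero => simpa using hx
    | succ j =>
      have hj := hbelow j (by omega)
      simpa [add_mul, add_assoc] using hstep _ hj.1 hj.2
  refine ⟨Nat.find hex, (Nat.find_spec hex).resolve_left (not_not.2 hmem), fun j hj => ?_⟩
  rcases hj.lt_or_eq with hj | rfl
  · exact ⟨(hbelow j hj).1, fun _ => (hbelow j hj).2⟩
  · exact ⟨hmem, fun h => absurd h (lt_irrefl _)⟩

structure IsRunTo (L F : Set ℕ) (x B : ℕ) : Prop where
  le : x ≤ B
  mem : B ∈ F
  subset : Icc x B ⊆ L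
  notMem : ∀ y ∈ Ico x B, y ∉ F

lemma IsRunTo.le_of_mem {x B X : ℕ} (h : IsRunTo L F x B) (hX : X ∈ F) (hxX : x ≤ X) :
    B ≤ X :=
  not_lt.1 fun hXB => h.notMem X ⟨hxX, hXB⟩ hX

lemma IsRunTo.mono {L' : Set ℕ} {x B : ℕ} (h : IsRunTo L F x B) (hL : L ⊆ L') :
    IsRunTo L' F x B :=
  ⟨h.le, h.mem, h.subset.trans hL, h.notMem⟩

lemma exists_isRunTo (hL : BddAbove L) (hstep : ∀ y ∈ L, y ∉ F → y + 1 ∈ L) {x : ℕ}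
    (hx : x ∈ L) : ∃ B, IsRunTo L F x B := by
  obtain ⟨k, hkF, hk⟩ := exists_add_mul_mem_of_step hL one_pos hstep hx
  simp only [mul_one] at hkF hk
  refine ⟨x + k, ⟨by omega, hkF, fun y ⟨hxy, hyB⟩ => ?_, fun y ⟨hxy, hyB⟩ => ?_⟩⟩
  · simpa [Nat.add_sub_cancel' hxy] using (hk (y - x) (by omega)).1
  · simpa [Nat.add_sub_cancel' hxy] using (hk (y - x) (by omega)).2 (by omega)

lemma exists_modEq_mem (hL : BddAbove L) {η : ℕ} (hη : 0 < η)
    (hstep : ∀ y ∈ L, y ∉ F → y + η ∈ L) {x : ℕ} (hx : x ∈ L) :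
    ∃ f ∈ F, f ≡ x [MOD η] := by
  obtain ⟨k, hkF, -⟩ := exists_add_mul_mem_of_step hL hη hstep hx
  exact ⟨_, hkF, Nat.add_mul_mod_self_right x k η⟩

end Progressions

lemma le_card_of_forall_exists_modEq {F : Finset ℕ} {η r k : ℕ} (hk : k ≤ η)
    (h : ∀ i < k, ∃ f ∈ F, f ≡ r + i [MOD η]) : k ≤ F.card := by
  choose! f hfF hf using h
  calc k = (Finset.range k).card := (Finset.card_range k).symm
    _ ≤ F.card := by
      refine Finset.card_le_card_of_injOn f (fun i hi => hfF i (Finset.mem_range.1 hi)) ?_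
      intro i hi j hj hij
      simp only [Finset.coe_range, mem_Iio] at hi hj
      have hrij : r + i ≡ r + j [MOD η] := (hf i hi).symm.trans (hij ▸ hf j hj)
      exact (Nat.ModEq.add_left_cancel' r hrij).eq_of_lt_of_lt (by omega) (by omega)

lemma mem_Sn {n k : ℕ} : k ∈ Sn n ↔ (2 ≤ k ∧ k ≤ n) ∨ k = n + 2 := Iff.rfl

lemma psi_subset_Vnm {n i : ℕ} {m : ℕ → ℕ} (hi : i ∈ Sn n) : psi m i ⊆ Vnm n m := by
  rintro p ⟨rfl, hp⟩
  exact ⟨hi, hp⟩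

lemma finite_Vnm (n : ℕ) (m : ℕ → ℕ) : (Vnm n m).Finite := by
  refine ((finite_Iic (n + 2)).biUnion fun i _ =>
    (finite_singleton i).prod (finite_Iio (m i))).subset ?_
  rintro ⟨i, j⟩ ⟨hi, hj⟩
  simp only [mem_iUnion, mem_prod, mem_singleton_iff, mem_Iio, mem_Iic]
  exact ⟨i, by rcases hi with h | h <;> omega, rfl, hj⟩

namespace Admissible

variable {n : ℕ} {m : ℕ → ℕ}

lemma one_le (hm : Admissible n m) {i : ℕ} (hi : i ∈ Sn n) : 1 ≤ m i := by
  by_cases h : 2 * i ∈ Sn n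
  · exact one_le_two.trans (hm.1 i hi h)
  · exact (hm.2.1 i hi h).ge

lemma mk_zero_mem_Vnm (hm : Admissible n m) {i : ℕ} (hi : i ∈ Sn n) : (i, 0) ∈ Vnm n m :=
  ⟨hi, hm.one_le hi⟩

lemma mk_zero_mem_psi (hm : Admissible n m) {i : ℕ} (hi : i ∈ Sn n) : (i, 0) ∈ psi m i :=
  ⟨rfl, hm.one_le hi⟩

lemma eq_mk_zero (hm : Admissible n m) {w : ℕ × ℕ} (hw : w ∈ Vnm n m)
    (hbig : n + 2 < 2 * w.1) : w = (w.1, 0) := by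
  have h1 : m w.1 = 1 := hm.2.1 w.1 hw.1 (by rw [mem_Sn]; omega)
  have h2 := hw.2
  exact Prod.ext rfl (by omega)

end Admissible

section Labeling

variable {n : ℕ} {m : ℕ → ℕ} {ℓ : ℕ × ℕ → ℕ}

lemma IsSumLabelingG.add_mem_image_iff (hℓ : IsSumLabelingG n m ℓ) {u w : ℕ × ℕ}
    (hu : u ∈ Vnm n m) (hw : w ∈ Vnm n m) (hne : u ≠ w) :
    ℓ u + ℓ w ∈ ℓ '' Vnm n m ↔ u.1 + w.1 ∈ Sn n := by
  rw [← and_iff_right hne (b := u.1 + w.1 ∈ Sn n)]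
  change _ ↔ AdjG n u w
  rw [hℓ.2 u hu w hw hne]
  exact ⟨fun ⟨x, hx, h⟩ => ⟨x, hx, h.symm⟩, fun ⟨x, hx, h⟩ => ⟨x, hx, h.symm⟩⟩

lemma IsSumLabelingG.label_ne_of_separating (hℓ : IsSumLabelingG n m ℓ) {u u' w : ℕ × ℕ}
    (hu : u ∈ Vnm n m) (hu' : u' ∈ Vnm n m) (hw : w ∈ Vnm n m) (hwu : w ≠ u)
    (hwu' : w ≠ u') (hadj : w.1 + u.1 ∈ Sn n) (hnadj : w.1 + u'.1 ∉ Sn n) :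
    ℓ u ≠ ℓ u' := by
  intro h
  apply hnadj
  rw [← hℓ.add_mem_image_iff hw hu' hwu', ← h]
  exact (hℓ.add_mem_image_iff hw hu hwu).2 hadj

lemma IsSumLabelingG.label_mk_zero_ne (hn : 5 ≤ n) (hm : Admissible n m)
    (hℓ : IsSumLabelingG n m ℓ) {i i' : ℕ} (hi : 2 ≤ i) (hii' : i < i')
    (hi' : i' ≤ n - 3) : ℓ (i, 0) ≠ ℓ (i', 0) := by
  have hV : ∀ {j}, 2 ≤ j → j ≤ n → (j, 0) ∈ Vnm n m := fun h1 h2 =>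
    hm.mk_zero_mem_Vnm (Or.inl ⟨h1, h2⟩)
  have hu := hV hi (by omega)
  have hu' := hV (j := i') (by omega) (by omega)
  by_cases hmid : 2 * i = n + 2
  · have hm2 : 2 ≤ m i := hm.1 i (Or.inl ⟨hi, by omega⟩) (by rw [hmid]; exact Or.inr rfl)
    exact hℓ.label_ne_of_separating hu hu' (w := (i, 1)) ⟨Or.inl ⟨hi, by omega⟩, hm2⟩
      (by simp) (by simp) (by simp only [mem_Sn]; omega) (by simp only [mem_Sn]; omega)
  by_cases hsum : i + i' = n + 2
  · by_cases hgap : i' = i + 2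
    · exact hℓ.label_ne_of_separating hu hu' (w := (i - 1, 0)) (hV (by omega) (by omega))
        (by simp; omega) (by simp; omega) (by simp only [mem_Sn]; omega)
        (by simp only [mem_Sn]; omega)
    · exact hℓ.label_ne_of_separating hu hu' (w := (n - i, 0)) (hV (by omega) (by omega))
        (by simp; omega) (by simp; omega) (by simp only [mem_Sn]; omega)
        (by simp only [mem_Sn]; omega)
  · exact hℓ.label_ne_of_separating hu hu' (w := (n + 2 - i, 0)) (hV (by omega) (by omega))
      (by simp; omega) (by simp; omega) (by simp only [mem_Sn]; omega)
      (by simp only [mem_Sn]; omega)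

end Labeling

section Blocked

variable {n : ℕ} {m : ℕ → ℕ} {ℓ : ℕ × ℕ → ℕ}

/-- The labels of `(n-2,0)`, `(n,0)` and `(n+2,0)`, the vertices not adjacent to `ψ(3)`. -/
def blockedLabels (n : ℕ) (ℓ : ℕ × ℕ → ℕ) : Finset ℕ :=
  {ℓ (n - 2, 0), ℓ (n, 0), ℓ (n + 2, 0)}

lemma mem_blockedLabels {B : ℕ} :
    B ∈ blockedLabels n ℓ ↔ B = ℓ (n - 2, 0) ∨ B = ℓ (n, 0) ∨ B = ℓ (n + 2, 0) := by
  simp [blockedLabels]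

lemma card_blockedLabels_le : (blockedLabels n ℓ).card ≤ 3 := Finset.card_le_three

lemma class_ne_of_label_notMem_blockedLabels (hn : 7 ≤ n) (hm : Admissible n m)
    {w : ℕ × ℕ} (hw : w ∈ Vnm n m) (hwK : ℓ w ∉ blockedLabels n ℓ) :
    w.1 ≠ n - 2 ∧ w.1 ≠ n ∧ w.1 ≠ n + 2 := by
  have hblocked : ¬ (w.1 = n - 2 ∨ w.1 = n ∨ w.1 = n + 2) := by
    intro hi
    rw [mem_blockedLabels, hm.eq_mk_zero hw (by omega)] at hwK
    rcases hi with h | h | h <;> simp [h] at hwK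
  omega

lemma add_label_mem_of_mem_psi_three (hn : 7 ≤ n) (hm : Admissible n m)
    (hℓ : IsSumLabelingG n m ℓ) {u : ℕ × ℕ} (hu : u ∈ psi m 3) {x : ℕ}
    (hx : x ∈ ℓ '' Vnm n m) (hxK : x ∉ blockedLabels n ℓ) (hxu : x ≠ ℓ u) :
    x + ℓ u ∈ ℓ '' Vnm n m := by
  obtain ⟨w, hw, rfl⟩ := hx
  have hclass := class_ne_of_label_notMem_blockedLabels hn hm hw hxK
  have hwu : w ≠ u := by rintro rfl; exact hxu rfl
  refine (hℓ.add_mem_image_iff hw (psi_subset_Vnm (by rw [mem_Sn]; omega) hu) hwu).2 ?_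
  have := hw.1
  rw [hu.1, mem_Sn] at *
  omega

lemma add_label_mem_of_mem_psi_two (hn : 7 ≤ n) (hm : Admissible n m)
    (hℓ : IsSumLabelingG n m ℓ) {u : ℕ × ℕ} (hu : u ∈ psi m 2) {x : ℕ}
    (hx : x ∈ ℓ '' Vnm n m) (hxK : x ∉ blockedLabels n ℓ) (hxd : x ≠ ℓ (n - 1, 0))
    (hxu : x ≠ ℓ u) : x + ℓ u ∈ ℓ '' Vnm n m := by
  obtain ⟨w, hw, rfl⟩ := hx
  have hclass := class_ne_of_label_notMem_blockedLabels hn hm hw hxK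
  have hwd : w.1 ≠ n - 1 := fun h => hxd <| by rw [hm.eq_mk_zero hw (by omega), h]
  have hwu : w ≠ u := by rintro rfl; exact hxu rfl
  refine (hℓ.add_mem_image_iff hw (psi_subset_Vnm (by rw [mem_Sn]; omega) hu) hwu).2 ?_
  have := hw.1
  rw [hu.1, mem_Sn] at *
  omega

lemma add_label_two_mem (hn : 5 ≤ n) (hm : Admissible n m) (hℓ : IsSumLabelingG n m ℓ)
    {X : ℕ}
    (hX : X = ℓ (n - 2, 0) ∨ X = ℓ (n, 0)) : X + ℓ (2, 0) ∈ ℓ '' Vnm n m := by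
  have h2V := hm.mk_zero_mem_Vnm (n := n) (i := 2) (by rw [mem_Sn]; omega)
  rcases hX with rfl | rfl <;>
  · exact (hℓ.add_mem_image_iff (hm.mk_zero_mem_Vnm (by rw [mem_Sn]; omega)) h2V
      (by simp; omega)).2 (by rw [mem_Sn]; omega)

end Blocked

section LabelOne

variable {n : ℕ} {m : ℕ → ℕ} {ℓ : ℕ × ℕ → ℕ} {v : ℕ × ℕ}
  (hm : Admissible n m) (hℓ : IsSumLabelingG n m ℓ) (hv : v ∈ psi m 3) (hv1 : ℓ v = 1)
include hm hℓ hv hv1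

lemma succ_mem_labels (hn : 7 ≤ n) {x : ℕ} (hx : x ∈ ℓ '' Vnm n m) (hx2 : 2 ≤ x)
    (hxK : x ∉ blockedLabels n ℓ) : x + 1 ∈ ℓ '' Vnm n m := by
  simpa [hv1] using add_label_mem_of_mem_psi_three hn hm hℓ hv hx hxK (by rw [hv1]; omega)

lemma succ_notMem_labels (hn : 7 ≤ n) {B : ℕ} (hB : B ∈ blockedLabels n ℓ) :
    B + 1 ∉ ℓ '' Vnm n m := by
  have hvV := psi_subset_Vnm (n := n) (by rw [mem_Sn]; omega) hv
  obtain ⟨i, hi, rfl⟩ : ∃ i, (i = n - 2 ∨ i = n ∨ i = n + 2) ∧ B = ℓ (i, 0) := by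
    rcases mem_blockedLabels.1 hB with h | h | h <;> exact ⟨_, by omega, h⟩
  have hiv : (i, 0) ≠ v := by
    rintro rfl
    have : i = 3 := hv.1
    omega
  rw [← hv1, hℓ.add_mem_image_iff (hm.mk_zero_mem_Vnm (by rw [mem_Sn]; omega)) hvV hiv, hv.1,
    mem_Sn]
  omega

lemma two_le_label (hn : 7 ≤ n) {u : ℕ × ℕ} (hu : u ∈ Vnm n m) (hu3 : u.1 ≠ 3)
    (hud : u.1 ≠ n - 1) : 2 ≤ ℓ u := by
  have hvV := psi_subset_Vnm (n := n) (by rw [mem_Sn]; omega) hv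
  have hdV : (n - 1, 0) ∈ Vnm n m := hm.mk_zero_mem_Vnm (by rw [mem_Sn]; omega)
  have hdv : (n - 1, 0) ≠ v := by
    rintro rfl
    have : n - 1 = 3 := hv.1
    omega
  have hud' : u ≠ (n - 1, 0) := by
    rintro rfl
    exact hud rfl
  have hsucc : ℓ (n - 1, 0) + ℓ v ∈ ℓ '' Vnm n m :=
    (hℓ.add_mem_image_iff hdV hvV hdv).2 (by rw [hv.1, mem_Sn]; omega)
  have hnot : ℓ u + ℓ (n - 1, 0) ∉ ℓ '' Vnm n m := by
    rw [hℓ.add_mem_image_iff hu hdV hud']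
    have := hu.1
    rw [mem_Sn] at this ⊢
    omega
  have hu1 : ℓ u ≠ 1 := fun h => hnot <| by
    rw [h, add_comm]
    rwa [hv1] at hsucc
  have := hℓ.1 u hu
  omega

lemma sub_five_le_card (hn : 7 ≤ n) (T : Finset ℕ)
    (hT : ∀ x ∈ ℓ '' Vnm n m, 2 ≤ x → x ∈ T) : n - 5 ≤ T.card := by
  classical
  set Z := (Finset.Icc 2 (n - 3)).erase 3
  have hZ : ∀ {i}, i ∈ Z ↔ 2 ≤ i ∧ i ≤ n - 3 ∧ i ≠ 3 := by
    simp only [Z, Finset.mem_erase, Finset.mem_Icc]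
    omega
  have hV : ∀ i ∈ Z, (i, 0) ∈ Vnm n m := fun i hi =>
    hm.mk_zero_mem_Vnm (by rw [mem_Sn]; have := hZ.1 hi; omega)
  have hinj : Set.InjOn (fun i => ℓ (i, 0)) Z := by
    intro i hi j hj hij
    have hi' := hZ.1 hi
    have hj' := hZ.1 hj
    by_contra hne
    rcases Nat.lt_or_gt_of_ne hne with h | h
    · exact hℓ.label_mk_zero_ne (by omega) hm (by omega) h (by omega) hij
    · exact hℓ.label_mk_zero_ne (by omega) hm (by omega) h (by omega) hij.symm
  calc n - 5 = Z.card := by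
        rw [Finset.card_erase_of_mem (Finset.mem_Icc.2 ⟨by omega, by omega⟩), Nat.card_Icc]
        omega
    _ = (Z.image fun i => ℓ (i, 0)).card := (Finset.card_image_of_injOn hinj).symm
    _ ≤ T.card := by
        refine Finset.card_le_card fun x hx => ?_
        obtain ⟨i, hi, rfl⟩ := Finset.mem_image.1 hx
        have hi' := hZ.1 hi
        exact hT _ ⟨_, hV i hi, rfl⟩
          (two_le_label hm hℓ hv hv1 hn (hV i hi) hi'.2.2 (by simp; omega))

lemma exists_isRunTo_blockedLabels (hn : 7 ≤ n) {x : ℕ} (hx : x ∈ ℓ '' Vnm n m)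
    (hx2 : 2 ≤ x) : ∃ B, IsRunTo (ℓ '' Vnm n m) (blockedLabels n ℓ) x B := by
  obtain ⟨B, hB⟩ := exists_isRunTo (L := ℓ '' Vnm n m ∩ Ici 2) (F := blockedLabels n ℓ)
    (((finite_Vnm n m).image ℓ).bddAbove.mono inter_subset_left)
    (fun y ⟨hy, hy2⟩ hyK => ⟨succ_mem_labels hm hℓ hv hv1 hn hy hy2 hyK, by
      rw [mem_Ici] at hy2 ⊢; omega⟩) ⟨hx, hx2⟩
  exact ⟨B, hB.mono inter_subset_left⟩

lemma exists_long_run {r : ℕ} (hr : 3 * (r + 1) + 5 < n) :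
    ∃ x B, x + r < B ∧ IsRunTo (ℓ '' Vnm n m) (blockedLabels n ℓ) x B := by
  classical
  by_contra! hshort
  have hcover : ∀ x ∈ ℓ '' Vnm n m, 2 ≤ x →
      x ∈ (blockedLabels n ℓ).biUnion fun B => Finset.Icc (B - r) B := by
    intro x hx hx2
    obtain ⟨B, hB⟩ := exists_isRunTo_blockedLabels hm hℓ hv hv1 (by omega) hx hx2
    have hxB : ¬ x + r < B := fun h => hshort x B h hB
    exact Finset.mem_biUnion.2 ⟨B, hB.mem, Finset.mem_Icc.2 ⟨by omega, hB.le⟩⟩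
  have h1 := sub_five_le_card hm hℓ hv hv1 (by omega) _ hcover
  have h2 := Finset.card_biUnion_le_card_mul (blockedLabels n ℓ) (fun B => Finset.Icc (B - r) B)
    (r + 1) fun B _ => by rw [Nat.card_Icc]; omega
  have h3 := Nat.mul_le_mul_right (r + 1) (card_blockedLabels_le (n := n) (ℓ := ℓ))
  omega

lemma lt_of_forall_add_mem_labels {η k : ℕ} {F : Finset ℕ} (hk : 3 * k + 5 < n)
    (hF : F.card < k) (hstep : ∀ y ∈ ℓ '' Vnm n m, y ∉ F → y + η ∈ ℓ '' Vnm n m) :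
    η < k := by
  by_contra! hηk
  obtain ⟨x, B, hxB, hrun⟩ := exists_long_run hm hℓ hv hv1 (r := k - 1) (by omega)
  have := le_card_of_forall_exists_modEq (r := x) hηk fun i hi =>
    exists_modEq_mem ((finite_Vnm n m).image ℓ).bddAbove (by omega) hstep
      (hrun.subset ⟨by omega, by omega⟩)
  omega

lemma label_le_four_of_mem_psi_three (hn : 21 ≤ n) {u : ℕ × ℕ} (hu : u ∈ psi m 3) :
    ℓ u ≤ 4 := by
  have hF : (insert (ℓ u) (blockedLabels n ℓ)).card < 5 :=
    Nat.lt_succ_of_le <| (Finset.card_insert_le _ _).trans (Nat.succ_le_succ card_blockedLabels_le)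
  have := lt_of_forall_add_mem_labels hm hℓ hv hv1 (by omega) hF fun y hy hyF => by
    rw [Finset.mem_insert, not_or] at hyF
    exact add_label_mem_of_mem_psi_three (by omega) hm hℓ hu hy hyF.2 hyF.1
  omega

lemma label_le_five_of_mem_psi_two (hn : 24 ≤ n) {u : ℕ × ℕ} (hu : u ∈ psi m 2) :
    ℓ u ≤ 5 := by
  have hF : (insert (ℓ u) (insert (ℓ (n - 1, 0)) (blockedLabels n ℓ))).card < 6 :=
    Nat.lt_succ_of_le <| (Finset.card_insert_le _ _).trans <| Nat.succ_le_succ <|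
      (Finset.card_insert_le _ _).trans (Nat.succ_le_succ card_blockedLabels_le)
  have := lt_of_forall_add_mem_labels hm hℓ hv hv1 (by omega) hF fun y hy hyF => by
    simp only [Finset.mem_insert, not_or] at hyF
    exact add_label_mem_of_mem_psi_two (by omega) hm hℓ hu hy hyF.2.2 hyF.2.1 hyF.1
  omega

lemma le_five_of_label_n_add_mem (hn : 24 ≤ n) {t : ℕ} (ht : t ∈ ℓ '' Vnm n m)
    (htb : t ≠ ℓ (n, 0)) (hsum : ℓ (n, 0) + t ∈ ℓ '' Vnm n m) : t ≤ 5 := by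
  obtain ⟨w, hw, rfl⟩ := ht
  have hne : (n, 0) ≠ w := by
    rintro rfl
    exact htb rfl
  have hadj := (hℓ.add_mem_image_iff (hm.mk_zero_mem_Vnm (by rw [mem_Sn]; omega)) hw hne).1 hsum
  have h2 : w.1 = 2 := by
    have := hw.1
    rw [mem_Sn] at hadj this
    omega
  exact label_le_five_of_mem_psi_two hm hℓ hv hv1 hn ⟨h2, h2 ▸ hw.2⟩

lemma blocked_add_two_le_top (hn : 7 ≤ n) :
    ℓ (n - 2, 0) + 2 ≤ ℓ (n + 2, 0) ∧ ℓ (n, 0) + 2 ≤ ℓ (n + 2, 0) := by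
  have hg := two_le_label hm hℓ hv hv1 hn (hm.mk_zero_mem_Vnm (i := 2) (by rw [mem_Sn]; omega))
    (by simp) (by simp; omega)
  obtain ⟨B₁, hB₁⟩ := exists_isRunTo_blockedLabels hm hℓ hv hv1 hn
    (add_label_two_mem (by omega) hm hℓ (Or.inl rfl)) (by omega)
  obtain ⟨B₂, hB₂⟩ := exists_isRunTo_blockedLabels hm hℓ hv hv1 hn
    (add_label_two_mem (by omega) hm hℓ (Or.inr rfl)) (by omega)
  have h₁ := hB₁.mem
  have h₂ := hB₂.mem
  rw [Finset.mem_coe, mem_blockedLabels] at h₁ h₂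
  have := hB₁.le
  have := hB₂.le
  omega

lemma label_le_top (hn : 7 ≤ n) {x : ℕ} (hx : x ∈ ℓ '' Vnm n m) : x ≤ ℓ (n + 2, 0) := by
  have htop := blocked_add_two_le_top hm hℓ hv hv1 hn
  by_cases hx2 : 2 ≤ x
  · obtain ⟨B, hB⟩ := exists_isRunTo_blockedLabels hm hℓ hv hv1 hn hx hx2
    have hBK := hB.mem
    rw [Finset.mem_coe, mem_blockedLabels] at hBK
    have := hB.le
    omega
  · omega

lemma sub_four_le_top (hn : 7 ≤ n) : n - 4 ≤ ℓ (n + 2, 0) := by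
  have := sub_five_le_card hm hℓ hv hv1 hn (Finset.Icc 2 (ℓ (n + 2, 0))) fun x hx hx2 =>
    Finset.mem_Icc.2 ⟨hx2, label_le_top hm hℓ hv hv1 hn hx⟩
  rw [Nat.card_Icc] at this
  omega

lemma not_isRunTo_of_two_le_psi_three_label (hn : 24 ≤ n) {u : ℕ × ℕ} (hu : u ∈ psi m 3)
    (hu2 : 2 ≤ ℓ u) {x B : ℕ} (hxB : x + 9 < B)
    (hrun : IsRunTo (ℓ '' Vnm n m) (blockedLabels n ℓ) x B) : False := by
  have hu4 := label_le_four_of_mem_psi_three hm hℓ hv hv1 (by omega) hu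
  have hsum := add_label_mem_of_mem_psi_three (by omega) hm hℓ hu
    (hrun.subset ⟨by omega, by omega⟩ : B + 1 - ℓ u ∈ _)
    (hrun.notMem _ ⟨by omega, by omega⟩) (by omega)
  rw [Nat.sub_add_cancel (by omega)] at hsum
  exact succ_notMem_labels hm hℓ hv hv1 (by omega) hrun.mem hsum

end LabelOne

section AllPsiThreeLabelsOne

variable {n : ℕ} {m : ℕ → ℕ} {ℓ : ℕ × ℕ → ℕ}
  (hm : Admissible n m) (hℓ : IsSumLabelingG n m ℓ) (h3 : ∀ u ∈ psi m 3, ℓ u = 1)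
include hm hℓ h3

lemma two_mem_labels (hn : 6 ≤ n) : 2 ∈ ℓ '' Vnm n m := by
  have h3S : 3 ∈ Sn n := by rw [mem_Sn]; omega
  have h0 : (3, 0) ∈ psi m 3 := hm.mk_zero_mem_psi h3S
  have h1 : (3, 1) ∈ psi m 3 := ⟨rfl, hm.1 3 h3S (by rw [mem_Sn]; omega)⟩
  have := (hℓ.add_mem_image_iff (psi_subset_Vnm h3S h0) (psi_subset_Vnm h3S h1) (by simp)).2
    (show 3 + 3 ∈ Sn n by rw [mem_Sn]; omega)
  rwa [h3 _ h0, h3 _ h1] at this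

lemma label_n_sub_one_add_notMem (hn : 4 ≤ n) {t : ℕ} (ht : t ∈ ℓ '' Vnm n m)
    (ht2 : 2 ≤ t) (htd : t ≠ ℓ (n - 1, 0)) : ℓ (n - 1, 0) + t ∉ ℓ '' Vnm n m := by
  obtain ⟨w, hw, rfl⟩ := ht
  have hw3 : w.1 ≠ 3 := fun h => by
    have := h3 w ⟨h, h ▸ hw.2⟩
    omega
  have hdw : (n - 1, 0) ≠ w := by
    rintro rfl
    exact htd rfl
  rw [hℓ.add_mem_image_iff (hm.mk_zero_mem_Vnm (by rw [mem_Sn]; omega)) hw hdw]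
  have := hw.1
  rw [mem_Sn] at this ⊢
  omega

lemma label_n_sub_one_eq (hn : 24 ≤ n) {x B : ℕ}
    (hrun : IsRunTo (ℓ '' Vnm n m) (blockedLabels n ℓ) x B) (hxB : x + ℓ (2, 0) ≤ B + 1)
    (hB : 2 * ℓ (2, 0) ≤ B) : ℓ (n - 1, 0) = B + 1 - ℓ (2, 0) := by
  have hv := hm.mk_zero_mem_psi (n := n) (i := 3) (by rw [mem_Sn]; omega)
  have hv1 := h3 _ hv
  have h2 := hm.mk_zero_mem_psi (n := n) (i := 2) (by rw [mem_Sn]; omega)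
  have hg2 := two_le_label hm hℓ hv hv1 (by omega) (psi_subset_Vnm (by rw [mem_Sn]; omega) h2)
    (by simp) (by simp; omega)
  have hg5 := label_le_five_of_mem_psi_two hm hℓ hv hv1 hn h2
  by_contra hne
  have hsum := add_label_mem_of_mem_psi_two (by omega) hm hℓ h2
    (hrun.subset ⟨by omega, by omega⟩ : B + 1 - ℓ (2, 0) ∈ _)
    (hrun.notMem _ ⟨by omega, by omega⟩) (Ne.symm hne) (by omega)
  rw [Nat.sub_add_cancel (by omega)] at hsum
  exact succ_notMem_labels hm hℓ hv hv1 (by omega) hrun.mem hsum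

lemma not_isRunTo_of_three_le_label_two (hn : 24 ≤ n) (hg : 3 ≤ ℓ (2, 0)) {x B : ℕ}
    (hxB : x + 9 < B) (hrun : IsRunTo (ℓ '' Vnm n m) (blockedLabels n ℓ) x B) : False := by
  have hv := hm.mk_zero_mem_psi (n := n) (i := 3) (by rw [mem_Sn]; omega)
  have hg5 := label_le_five_of_mem_psi_two hm hℓ hv (h3 _ hv) hn
    (hm.mk_zero_mem_psi (i := 2) (by rw [mem_Sn]; omega))
  have hd := label_n_sub_one_eq hm hℓ h3 hn hrun (by omega) (by omega)
  refine label_n_sub_one_add_notMem hm hℓ h3 (by omega) (two_mem_labels hm hℓ h3 (by omega))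
    le_rfl (by omega) ?_
  rw [hd]
  exact hrun.subset ⟨by omega, by omega⟩

section LabelTwoEqTwo

variable (hg : ℓ (2, 0) = 2)
include hg

lemma le_six_of_isRunTo (hn : 24 ≤ n) {x B : ℕ}
    (hrun : IsRunTo (ℓ '' Vnm n m) (blockedLabels n ℓ) x B)
    (hB : B = ℓ (n - 2, 0) ∨ B = ℓ (n, 0)) (hxB : x < B) : B ≤ 6 := by
  by_contra! hB6
  have hd := label_n_sub_one_eq hm hℓ h3 hn hrun (by omega) (by omega)
  have h3mem : 3 ∈ ℓ '' Vnm n m := by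
    have hv := hm.mk_zero_mem_psi (n := n) (i := 3) (by rw [mem_Sn]; omega)
    have := (hℓ.add_mem_image_iff (hm.mk_zero_mem_Vnm (i := 2) (by rw [mem_Sn]; omega))
      (psi_subset_Vnm (by rw [mem_Sn]; omega) hv) (by simp)).2 (by rw [mem_Sn]; omega)
    rwa [hg, h3 _ hv] at this
  refine label_n_sub_one_add_notMem hm hℓ h3 (by omega) h3mem (by norm_num) (by omega) ?_
  have := add_label_two_mem (by omega) hm hℓ hB
  rwa [hg, show B + 2 = ℓ (n - 1, 0) + 3 by omega] at this

lemma exists_isRunTo_two (hn : 24 ≤ n) :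
    ∃ B, IsRunTo (ℓ '' Vnm n m) (blockedLabels n ℓ) 2 B ∧
      (B = ℓ (n - 2, 0) ∨ B = ℓ (n, 0)) ∧ B ≤ 6 := by
  have hv := hm.mk_zero_mem_psi (n := n) (i := 3) (by rw [mem_Sn]; omega)
  have hv1 := h3 _ hv
  have ha2 := two_le_label hm hℓ hv hv1 (by omega)
    (hm.mk_zero_mem_Vnm (i := n - 2) (by rw [mem_Sn]; omega)) (by simp; omega) (by simp; omega)
  have htop := blocked_add_two_le_top hm hℓ hv hv1 (by omega)
  obtain ⟨B, hB⟩ := exists_isRunTo_blockedLabels hm hℓ hv hv1 (by omega)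
    (two_mem_labels hm hℓ h3 (by omega)) le_rfl
  have hBab : B = ℓ (n - 2, 0) ∨ B = ℓ (n, 0) := by
    have := hB.le_of_mem (by simp [mem_blockedLabels]) ha2
    have := hB.mem
    rw [Finset.mem_coe, mem_blockedLabels] at this
    omega
  refine ⟨B, hB, hBab, ?_⟩
  rcases hB.le.eq_or_lt with h | h
  · omega
  · exact le_six_of_isRunTo hm hℓ h3 hg hn hB hBab h

lemma blocked_le_eight (hn : 24 ≤ n) : ℓ (n - 2, 0) ≤ 8 ∧ ℓ (n, 0) ≤ 8 := by
  have hv := hm.mk_zero_mem_psi (n := n) (i := 3) (by rw [mem_Sn]; omega)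
  have hv1 := h3 _ hv
  have hVa : (n - 2, 0) ∈ Vnm n m := hm.mk_zero_mem_Vnm (by rw [mem_Sn]; omega)
  have hVb : (n, 0) ∈ Vnm n m := hm.mk_zero_mem_Vnm (by rw [mem_Sn]; omega)
  have ha2 := two_le_label hm hℓ hv hv1 (by omega) hVa (by simp; omega) (by simp; omega)
  have hb2 := two_le_label hm hℓ hv hv1 (by omega) hVb (by simp; omega) (by simp; omega)
  have htop := blocked_add_two_le_top hm hℓ hv hv1 (by omega)
  obtain ⟨B₁, h₁, hB₁, hB₁6⟩ := exists_isRunTo_two hm hℓ h3 hg hn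
  have hgap : B₁ + 1 ∉ ℓ '' Vnm n m := succ_notMem_labels hm hℓ hv hv1 (by omega) h₁.mem
  obtain ⟨B₂, h₂⟩ := exists_isRunTo_blockedLabels hm hℓ hv hv1 (by omega) (x := B₁ + 2)
    (by simpa [hg] using add_label_two_mem (by omega) hm hℓ hB₁) (by omega)
  have hB₂K := h₂.mem
  rw [Finset.mem_coe, mem_blockedLabels] at hB₂K
  have hB₂ : B₂ = ℓ (n + 2, 0) ∨ B₂ ≤ 8 := by
    by_cases hc : B₂ = ℓ (n + 2, 0)
    · exact Or.inl hc
    rcases h₂.le.eq_or_lt with h | h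
    · omega
    · exact Or.inr ((le_six_of_isRunTo hm hℓ h3 hg hn h₂ (by omega) h).trans (by norm_num))
  have hX : ∀ X, X = ℓ (n - 2, 0) ∨ X = ℓ (n, 0) → X ≤ 8 := by
    intro X hX
    have hXK : X ∈ (blockedLabels n ℓ : Set ℕ) := by
      rw [Finset.mem_coe, mem_blockedLabels]
      omega
    have hXL : X ∈ ℓ '' Vnm n m := by
      rcases hX with rfl | rfl
      exacts [⟨_, hVa, rfl⟩, ⟨_, hVb, rfl⟩]
    have hB₁X := h₁.le_of_mem hXK (by omega)
    have hXgap : X ≠ B₁ + 1 := by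
      rintro rfl
      exact hgap hXL
    have hB₂X : X < B₁ + 2 ∨ B₂ ≤ X := by
      by_contra! h
      exact h₂.notMem X ⟨h.1, h.2⟩ hXK
    have := h₂.le
    omega
  exact ⟨hX _ (Or.inl rfl), hX _ (Or.inr rfl)⟩

lemma false_of_label_two_eq_two (hn : 24 ≤ n) : False := by
  have hv := hm.mk_zero_mem_psi (n := n) (i := 3) (by rw [mem_Sn]; omega)
  have hv1 := h3 _ hv
  obtain ⟨ha, hb⟩ := blocked_le_eight hm hℓ h3 hg hn
  have htop := blocked_add_two_le_top hm hℓ hv hv1 (by omega)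
  have hc := sub_four_le_top hm hℓ hv hv1 (by omega)
  set M := max (ℓ (n - 2, 0)) (ℓ (n, 0))
  have hMa := le_max_left (ℓ (n - 2, 0)) (ℓ (n, 0))
  have hMb := le_max_right (ℓ (n - 2, 0)) (ℓ (n, 0))
  have hMmem : M + 2 ∈ ℓ '' Vnm n m := by
    simpa [hg] using add_label_two_mem (by omega) hm hℓ (max_choice _ _)
  obtain ⟨B, hB⟩ := exists_isRunTo_blockedLabels hm hℓ hv hv1 (by omega) hMmem (by omega)
  have hBc : B = ℓ (n + 2, 0) := by
    have := hB.mem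
    rw [Finset.mem_coe, mem_blockedLabels] at this
    have := hB.le
    omega
  have hcL : ℓ (n + 2, 0) ∈ ℓ '' Vnm n m :=
    ⟨_, hm.mk_zero_mem_Vnm (by rw [mem_Sn]; omega), rfl⟩
  have := le_five_of_label_n_add_mem hm hℓ hv hv1 hn
    (hB.subset ⟨by omega, by omega⟩ : ℓ (n + 2, 0) - ℓ (n, 0) ∈ _) (by omega)
    (by rwa [Nat.add_sub_cancel' (by omega)])
  omega

end LabelTwoEqTwo

end AllPsiThreeLabelsOne

/-- For `n ≥ 39`, any admissible `m`, and any sum labeling `ℓ` of `G(n,m)`,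
no vertex of `ψ(3)` has label `1`. -/
theorem one_not_on_psi_three (n : ℕ) (hn : 39 ≤ n) (m : ℕ → ℕ)
    (hm : Admissible n m) (ℓ : ℕ × ℕ → ℕ) (hℓ : IsSumLabelingG n m ℓ)
    (v : ℕ × ℕ) (hv : v ∈ psi m 3) :
    ℓ v ≠ 1 := by
  intro hv1
  obtain ⟨x, B, hxB, hrun⟩ := exists_long_run hm hℓ hv hv1 (r := 9) (by omega)
  by_cases h3 : ∀ u ∈ psi m 3, ℓ u = 1
  · have hg := two_le_label hm hℓ hv hv1 (by omega)
      (hm.mk_zero_mem_Vnm (i := 2) (by rw [mem_Sn]; omega)) (by simp) (by simp; omega)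
    rcases hg.eq_or_lt with hg | hg
    · exact false_of_label_two_eq_two hm hℓ h3 hg.symm (by omega)
    · exact not_isRunTo_of_three_le_label_two hm hℓ h3 (by omega) hg hxB hrun
  · push Not at h3
    obtain ⟨u, hu, hu1⟩ := h3
    have hu_pos := hℓ.1 u (psi_subset_Vnm (by rw [mem_Sn]; omega) hu)
    exact not_isRunTo_of_two_le_psi_three_label hm hℓ hv hv1 (by omega) hu (by omega) hxB hrun
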